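/- Consider the parametric linear program LP(ω): minimize c^T x over x ∈ ℝ^n subject to G x ≤ ψ + F ω, and its dual: maximize −σ^T(ψ + F ω) over σ ∈ ℝ^m subject to σ ≥ 0 and G^T σ = −c. Let Ω ⊆ ℝ^k be a polyhedron, and suppose x* : ℝ^k → ℝ^n and σ* : ℝ^k → ℝ^m are functions such that for every ω ∈ Ω, x*(ω) is the unique optimal solution of LP(ω) and σ*(ω) is the unique optimal solution of the dual. Then there exist finitely many polyhedra R₁, …, R_N in ℝ^k whose union equals Ω such that, for each i, x* coincides with an affine map on R_i and σ* is constant on R_i; consequently the primal decision policy is piecewise affine and the dual decision policy is a stepwise (piecewise constant) function on Ω. -/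

import Mathlib

/-!
Fix `ω ∈ Ω` and let `J` be the set of constraints active at `x*(ω)`. If a direction `d` kept the
active constraints tight, `x*(ω) ± t d` would both be feasible for small `t > 0` and one of them
would be at least as good as `x*(ω)`; so the active rows are injective and `x*(ω)` is the value at
`ω` of an affine map determined by `J` alone. The same two-sided perturbation shows that `σ*(ω)`
is the only dual-feasible point vanishing wherever it vanishes, so `σ*` takes finitely many values.
By strong duality (Farkas' lemma) `x*(ω)` and `σ*(ω)` have no duality gap, so `ω` lies in the
polyhedron of parameters at which the affine candidate of `J` and the dual point `σ₀ = σ*(ω)` are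
feasible with no gap; conversely, on that polyhedron weak duality and uniqueness force `x*` to be
the affine candidate and `σ*` to be `σ₀`. There are finitely many pairs `(J, σ₀)`.
-/

/-- A polyhedron in `ℝ^k`: a set of the form `{x | A x ≤ b}` (componentwise). -/
def IsPolyhedron {k : ℕ} (S : Set (Fin k → ℝ)) : Prop :=
  ∃ (m : ℕ) (A : Matrix (Fin m) (Fin k) ℝ) (b : Fin m → ℝ),
    S = {x | ∀ i, A.mulVec x i ≤ b i}

open Filter Function Matrix PointedCone Topology

theorem PointedCone.farkas {𝕜 E F ι : Type*} [Field 𝕜] [LinearOrder 𝕜] [IsStrictOrderedRing 𝕜]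
    [AddCommGroup E] [Module 𝕜 E] [AddCommGroup F] [Module 𝕜 F] {p : E →ₗ[𝕜] F →ₗ[𝕜] 𝕜}
    (hp : p.SeparatingLeft) (v : ι → E) (s : Finset ι) (x : E) :
    x ∈ hull 𝕜 (v '' s) ∨ ∃ d ∈ dual p (v '' s), p x d < 0 := by
  classical
  induction s using Finset.induction_on generalizing v x with
  | empty =>
    by_cases hx : x = 0
    · exact Or.inl (by simp [hx])
    obtain ⟨d, hd⟩ : ∃ d, p x d ≠ 0 := by
      by_contra! h
      exact hx (hp x h)
    refine Or.inr ?_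
    rcases hd.lt_or_gt with hd | hd
    · exact ⟨d, by simp, hd⟩
    · exact ⟨-d, by simp, by simpa using hd⟩
  | insert a s ha ih =>
    rw [Finset.coe_insert, Set.image_insert_eq]
    obtain hx | ⟨d, hd, hxd⟩ := ih v x
    · exact Or.inl (Submodule.span_mono (Set.subset_insert _ _) hx)
    by_cases had : 0 ≤ p (v a) d
    · exact Or.inr ⟨d, by simp_all, hxd⟩
    replace had := not_le.mp had
    -- `T` projects along `v a` onto `{y | p y d = 0}`; the induction hypothesis is applied to
    -- the projected family.
    set T : E →ₗ[𝕜] E := LinearMap.id - ((p (v a) d)⁻¹ • p.flip d).smulRight (v a)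
    have hT : ∀ y, T y = y - ((p (v a) d)⁻¹ * p y d) • v a := fun y => by simp [T]
    obtain hTx | ⟨d', hd', hxd'⟩ := ih (T ∘ v) (T x)
    · left
      rw [Set.image_comp, hull, ← LinearMap.coe_restrictScalars {c : 𝕜 // 0 ≤ c} T,
        Submodule.span_image] at hTx
      obtain ⟨y, hy, hTy⟩ := Submodule.mem_map.1 hTx
      have hyd : 0 ≤ p y d := by
        rw [← dual_hull] at hd
        exact hd hy
      have hx : x = y + ((p (v a) d)⁻¹ * (p x d - p y d)) • v a := by
        replace hTy : T y = T x := hTy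
        rw [hT, hT] at hTy
        linear_combination (norm := module) -hTy
      have ht : 0 ≤ (p (v a) d)⁻¹ * (p x d - p y d) :=
        mul_nonneg_of_nonpos_of_nonpos (inv_nonpos.2 had.le) (by linarith)
      rw [hx, add_comm]
      exact add_mem ((hull 𝕜 _).smul_mem ht (subset_hull (Set.mem_insert _ _)))
        (Submodule.span_mono (Set.subset_insert _ _) hy)
    · right
      -- `d' - … • d` is the transpose of `T` applied to `d'`.
      have key : ∀ y, p y (d' - (p (v a) d' / p (v a) d) • d) = p (T y) d' := by
        intro y
        simp only [hT, map_sub, map_smul, LinearMap.sub_apply, LinearMap.smul_apply, smul_eq_mul]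
        field_simp
      refine ⟨_, ?_, by rwa [key]⟩
      rintro _ (rfl | ⟨i, hi, rfl⟩)
      · rw [key, hT, inv_mul_cancel₀ had.ne, one_smul, sub_self, map_zero, LinearMap.zero_apply]
      · rw [key]
        exact hd' ⟨i, hi, rfl⟩

lemma Matrix.separatingLeft_dotProductBilin {R n : Type*} [CommRing R] [LinearOrder R]
    [IsStrictOrderedRing R] [Fintype n] :
    (dotProductBilin R R : (n → R) →ₗ[R] (n → R) →ₗ[R] R).SeparatingLeft :=
  fun x hx => dotProduct_self_eq_zero.1 (hx x)

def IsUniqueMinOn {α β : Type*} [Preorder β] (f : α → β) (s : Set α) (a : α) : Prop :=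
  a ∈ s ∧ ∀ x ∈ s, x ≠ a → f a < f x

lemma IsUniqueMinOn.isMinOn {α β : Type*} [Preorder β] {f : α → β} {s : Set α} {a : α}
    (h : IsUniqueMinOn f s a) : IsMinOn f s a := fun x hx => by
  rcases eq_or_ne x a with rfl | hne
  · exact le_rfl
  · exact (h.2 x hx hne).le

lemma eventually_add_smul_le {ι : Type*} [Finite ι] {u v w : ι → ℝ} (huw : u ≤ w)
    (hv : ∀ i, u i = w i → v i ≤ 0) : ∀ᶠ t in 𝓝[>] (0 : ℝ), u + t • v ≤ w := by
  simp only [Pi.le_def, Pi.add_apply, Pi.smul_apply, smul_eq_mul, eventually_all]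
  intro i
  rcases (huw i).eq_or_lt with h | h
  · filter_upwards [self_mem_nhdsWithin] with t (ht : 0 < t)
    nlinarith [hv i h]
  · have hcont : Tendsto (fun t : ℝ => u i + t * v i) (𝓝 0) (𝓝 (u i)) :=
      (by fun_prop : Continuous fun t : ℝ => u i + t * v i).tendsto' 0 (u i) (by simp)
    exact nhdsWithin_le_nhds ((hcont.eventually (gt_mem_nhds h)).mono fun _ => le_of_lt)

lemma IsUniqueMinOn.eq_zero_of_eventually_mem {n : Type*} [Fintype n] {s : Set (n → ℝ)}
    {c x d : n → ℝ} (hx : IsUniqueMinOn (c ⬝ᵥ ·) s x)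
    (hadd : ∀ᶠ t in 𝓝[>] (0 : ℝ), x + t • d ∈ s) (hsub : ∀ᶠ t in 𝓝[>] (0 : ℝ), x - t • d ∈ s) :
    d = 0 := by
  obtain ⟨t, ⟨hp, hm⟩, ht⟩ := ((hadd.and hsub).and self_mem_nhdsWithin).exists
  by_contra hd
  have htd : t • d ≠ 0 := smul_ne_zero (ne_of_gt ht) hd
  have h1 := hx.2 _ hp (by simpa using htd)
  have h2 := hx.2 _ hm (by simpa using htd)
  simp only [dotProduct_add, dotProduct_sub] at h1 h2
  linarith

section LinearProgram

variable {m n : Type*} [Fintype m] {G : Matrix m n ℝ} {b : m → ℝ} {c : n → ℝ}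

lemma IsUniqueMinOn.eq_of_forall_eq_zero {σ τ : m → ℝ}
    (hσ : IsUniqueMinOn (b ⬝ᵥ ·) {τ | 0 ≤ τ ∧ Gᵀ *ᵥ τ = -c} σ) (hτ : 0 ≤ τ ∧ Gᵀ *ᵥ τ = -c)
    (hsupp : ∀ i, σ i = 0 → τ i = 0) : τ = σ := by
  have hfeas : ∀ d, (∀ i, σ i = 0 → d i = 0) → Gᵀ *ᵥ d = 0 →
      ∀ᶠ t in 𝓝[>] (0 : ℝ), σ + t • d ∈ {τ | 0 ≤ τ ∧ Gᵀ *ᵥ τ = -c} := fun d hd hGd => by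
    have hσ0 : -σ ≤ 0 := neg_nonpos.2 hσ.1.1
    have hv : ∀ i, (-σ) i = (0 : m → ℝ) i → (-d) i ≤ 0 := fun i hi => by
      rw [Pi.neg_apply, Pi.zero_apply, neg_eq_zero] at hi
      simp [hd i hi]
    filter_upwards [eventually_add_smul_le hσ0 hv] with t ht
    rw [smul_neg, ← neg_add, neg_nonpos] at ht
    exact ⟨ht, by rw [mulVec_add, mulVec_smul, hGd, smul_zero, add_zero, hσ.1.2]⟩
  have hd : ∀ i, σ i = 0 → (τ - σ) i = 0 := fun i hi => by simp [hi, hsupp i hi]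
  have hGd : Gᵀ *ᵥ (τ - σ) = 0 := by rw [mulVec_sub, hτ.2, hσ.1.2, sub_self]
  refine sub_eq_zero.1 (hσ.eq_zero_of_eventually_mem (hfeas _ hd hGd) ?_)
  refine (hfeas (-(τ - σ)) (fun i hi => by simp [hd i hi])
    (by rw [mulVec_neg, hGd, neg_zero])).mono fun t ht => ?_
  rwa [smul_neg, ← sub_eq_add_neg] at ht

variable [Fintype n]

lemma neg_dotProduct_le_dotProduct {x : n → ℝ} {σ : m → ℝ} (hx : G *ᵥ x ≤ b) (hσ : 0 ≤ σ)
    (hGσ : Gᵀ *ᵥ σ = -c) : -(b ⬝ᵥ σ) ≤ c ⬝ᵥ x := by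
  have h := dotProduct_le_dotProduct_of_nonneg_left hx hσ
  rw [dotProduct_mulVec, ← mulVec_transpose, hGσ, neg_dotProduct, dotProduct_comm σ] at h
  linarith

theorem exists_dual_of_isMinOn {x : n → ℝ} (hx : G *ᵥ x ≤ b)
    (hmin : IsMinOn (c ⬝ᵥ ·) {y | G *ᵥ y ≤ b} x) :
    ∃ σ, 0 ≤ σ ∧ Gᵀ *ᵥ σ = -c ∧ -(b ⬝ᵥ σ) = c ⬝ᵥ x := by
  classical
  set J := Finset.univ.filter fun i => (G *ᵥ x) i = b i
  obtain hc | ⟨d, hd, hcd⟩ :=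
    farkas (separatingLeft_dotProductBilin (R := ℝ)) (fun i => G i) J (-c)
  · obtain ⟨μ, hμ⟩ := (Submodule.mem_span_image_finset_iff_exists_fun' _).1 hc
    set σ : m → ℝ := fun i => if i ∈ J then (μ i : ℝ) else 0
    have hGσ : Gᵀ *ᵥ σ = -c := by
      rw [mulVec_transpose, vecMul_eq_sum, ← hμ]
      simp only [σ, ite_smul, zero_smul, Finset.sum_ite_mem, Finset.univ_inter]
      rfl
    refine ⟨σ, fun i => ?_, hGσ, ?_⟩
    · dsimp only [σ]
      split_ifs
      exacts [(μ i).2, le_rfl]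
    · have hslack : b ⬝ᵥ σ = σ ⬝ᵥ (G *ᵥ x) := by
        rw [dotProduct_comm]
        refine Finset.sum_congr rfl fun i _ => ?_
        by_cases hi : i ∈ J
        · rw [(Finset.mem_filter.1 hi).2]
        · simp [σ, hi]
      rw [hslack, dotProduct_mulVec, ← mulVec_transpose, hGσ, neg_dotProduct, neg_neg]
  · -- `-d` would be a feasible direction along which `c ⬝ᵥ ·` strictly decreases.
    exfalso
    have hGd : ∀ i, (G *ᵥ x) i = b i → -(G *ᵥ d) i ≤ 0 := fun i hi =>
      neg_nonpos.2 (hd ⟨i, Finset.mem_filter.2 ⟨Finset.mem_univ i, hi⟩, rfl⟩)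
    obtain ⟨t, hfeas, ht : 0 < t⟩ :=
      ((eventually_add_smul_le hx hGd).and self_mem_nhdsWithin).exists
    have hle : c ⬝ᵥ x ≤ c ⬝ᵥ (x - t • d) := hmin (show G *ᵥ (x - t • d) ≤ b by
      rwa [mulVec_sub, mulVec_smul, sub_eq_add_neg, ← smul_neg])
    simp only [dotProduct_sub, dotProduct_smul, smul_eq_mul] at hle
    simp only [dotProductBilin_apply_apply, neg_dotProduct, neg_neg_iff_pos] at hcd
    nlinarith

lemma IsUniqueMinOn.injective_mulVec_active {x : n → ℝ}
    (hx : IsUniqueMinOn (c ⬝ᵥ ·) {y | G *ᵥ y ≤ b} x) :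
    Injective (G.submatrix ((↑) : {i // (G *ᵥ x) i = b i} → m) id).mulVec := by
  have hfeas : ∀ d, (∀ i, (G *ᵥ x) i = b i → (G *ᵥ d) i = 0) →
      ∀ᶠ t in 𝓝[>] (0 : ℝ), x + t • d ∈ {y | G *ᵥ y ≤ b} := fun d hd => by
    filter_upwards [eventually_add_smul_le hx.1 fun i hi => (hd i hi).le] with t ht
    show G *ᵥ (x + t • d) ≤ b
    rwa [mulVec_add, mulVec_smul]
  intro d₁ d₂ h
  have hd : ∀ i, (G *ᵥ x) i = b i → (G *ᵥ (d₁ - d₂)) i = 0 := fun i hi => by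
    rw [mulVec_sub, Pi.sub_apply, sub_eq_zero]
    exact congrFun h ⟨i, hi⟩
  refine sub_eq_zero.1 (hx.eq_zero_of_eventually_mem (hfeas _ hd) ?_)
  refine (hfeas (-(d₁ - d₂)) fun i hi => ?_).mono fun t ht => ?_
  · rw [mulVec_neg, Pi.neg_apply, hd i hi, neg_zero]
  · rwa [smul_neg, ← sub_eq_add_neg] at ht

lemma dotProduct_eq_neg_of_isMinOn {x : n → ℝ} {σ : m → ℝ} (hx : G *ᵥ x ≤ b)
    (hxmin : IsMinOn (c ⬝ᵥ ·) {y | G *ᵥ y ≤ b} x) (hσ : 0 ≤ σ ∧ Gᵀ *ᵥ σ = -c)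
    (hσmin : IsMinOn (b ⬝ᵥ ·) {τ | 0 ≤ τ ∧ Gᵀ *ᵥ τ = -c} σ) : c ⬝ᵥ x = -(b ⬝ᵥ σ) := by
  obtain ⟨μ, hμ, hGμ, hμx⟩ := exists_dual_of_isMinOn hx hxmin
  have h₁ : b ⬝ᵥ σ ≤ b ⬝ᵥ μ := hσmin ⟨hμ, hGμ⟩
  have h₂ := neg_dotProduct_le_dotProduct hx hσ.1 hσ.2
  linarith

lemma IsUniqueMinOn.eq_of_dotProduct_le {x y : n → ℝ} {σ : m → ℝ}
    (hx : IsUniqueMinOn (c ⬝ᵥ ·) {y | G *ᵥ y ≤ b} x) (hy : G *ᵥ y ≤ b)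
    (hσ : 0 ≤ σ ∧ Gᵀ *ᵥ σ = -c) (hyσ : c ⬝ᵥ y ≤ -(b ⬝ᵥ σ)) : y = x := by
  by_contra hne
  have h₁ : c ⬝ᵥ x < c ⬝ᵥ y := hx.2 y hy hne
  have h₂ := neg_dotProduct_le_dotProduct hx.1 hσ.1 hσ.2
  linarith

lemma IsUniqueMinOn.eq_of_le_neg_dotProduct {y : n → ℝ} {σ τ : m → ℝ}
    (hσ : IsUniqueMinOn (b ⬝ᵥ ·) {τ | 0 ≤ τ ∧ Gᵀ *ᵥ τ = -c} σ) (hy : G *ᵥ y ≤ b)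
    (hτ : 0 ≤ τ ∧ Gᵀ *ᵥ τ = -c) (hyτ : c ⬝ᵥ y ≤ -(b ⬝ᵥ τ)) : τ = σ := by
  by_contra hne
  have h₁ : b ⬝ᵥ σ < b ⬝ᵥ τ := hσ.2 τ hτ hne
  have h₂ := neg_dotProduct_le_dotProduct hy hσ.1.1 hσ.1.2
  linarith

end LinearProgram

lemma exists_affine_of_injective {K ι n k : Type*} [Field K] [Fintype n] [Fintype k]
    [DecidableEq k] {P : Matrix ι n K} (hP : Injective P.mulVec) (Q : Matrix ι k K) (r : ι → K) :
    ∃ (A : Matrix n k K) (x₀ : n → K), ∀ x ω, P *ᵥ x = r + Q *ᵥ ω → x = A *ᵥ ω + x₀ := by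
  obtain ⟨L, hL⟩ := P.mulVecLin.exists_leftInverse_of_injective (LinearMap.ker_eq_bot.2 hP)
  refine ⟨LinearMap.toMatrix' (L ∘ₗ Q.mulVecLin), L r, fun x ω h => ?_⟩
  rw [LinearMap.toMatrix'_mulVec, LinearMap.comp_apply, add_comm, ← map_add, mulVecLin_apply,
    ← h]
  exact (LinearMap.congr_fun hL x).symm

lemma IsPolyhedron.inter {k : ℕ} {S T : Set (Fin k → ℝ)} (hS : IsPolyhedron S)
    (hT : IsPolyhedron T) : IsPolyhedron (S ∩ T) := by
  obtain ⟨m₁, A₁, b₁, rfl⟩ := hS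
  obtain ⟨m₂, A₂, b₂, rfl⟩ := hT
  refine ⟨m₁ + m₂, Matrix.of (Fin.append (fun i => A₁ i) (fun i => A₂ i)), Fin.append b₁ b₂, ?_⟩
  ext x
  simp [Fin.forall_fin_add, mulVec, Fin.append_left, Fin.append_right]

lemma isPolyhedron_setOf_mulVec_le {ι : Type*} [Fintype ι] {k : ℕ} (A : Matrix ι (Fin k) ℝ)
    (b : ι → ℝ) : IsPolyhedron {x | A *ᵥ x ≤ b} :=
  let e := Fintype.equivFin ι
  ⟨Fintype.card ι, A.submatrix e.symm id, b ∘ e.symm,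
    Set.ext fun _ => e.symm.forall_congr_right.symm⟩

lemma isPolyhedron_setOf_dotProduct_le {k : ℕ} (a : Fin k → ℝ) (r : ℝ) :
    IsPolyhedron {x | a ⬝ᵥ x ≤ r} := by
  convert isPolyhedron_setOf_mulVec_le (Matrix.of fun (_ : Unit) => a) (fun _ => r) using 3
  simp [Pi.le_def, mulVec]

section OptimalityRegion

variable {m n : Type*} [Fintype m] [Fintype n] {k : ℕ} (c : n → ℝ) (G : Matrix m n ℝ)
  (ψ : m → ℝ) (F : Matrix m (Fin k) ℝ) (Ω : Set (Fin k → ℝ))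

-- For dual-feasible `σ₀`, weak duality turns the last inequality into "no duality gap".
def optimalityRegion (A : Matrix n (Fin k) ℝ) (x₀ : n → ℝ) (σ₀ : m → ℝ) :
    Set (Fin k → ℝ) :=
  {ω ∈ Ω | G *ᵥ (A *ᵥ ω + x₀) ≤ ψ + F *ᵥ ω ∧ c ⬝ᵥ (A *ᵥ ω + x₀) ≤ -((ψ + F *ᵥ ω) ⬝ᵥ σ₀)}

lemma isPolyhedron_optimalityRegion (hΩ : IsPolyhedron Ω)
    (A : Matrix n (Fin k) ℝ) (x₀ : n → ℝ) (σ₀ : m → ℝ) :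
    IsPolyhedron (optimalityRegion c G ψ F Ω A x₀ σ₀) := by
  have hprimal : ∀ ω, G *ᵥ (A *ᵥ ω + x₀) ≤ ψ + F *ᵥ ω ↔ (G * A - F) *ᵥ ω ≤ ψ - G *ᵥ x₀ :=
    fun ω => by
      rw [sub_mulVec, ← mulVec_mulVec, mulVec_add, sub_le_sub_iff, add_comm ψ]
  have hgap : ∀ ω, c ⬝ᵥ (A *ᵥ ω + x₀) ≤ -((ψ + F *ᵥ ω) ⬝ᵥ σ₀) ↔
      (c ᵥ* A + σ₀ ᵥ* F) ⬝ᵥ ω ≤ -(c ⬝ᵥ x₀) - ψ ⬝ᵥ σ₀ := fun ω => by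
    rw [dotProduct_add, add_dotProduct, add_dotProduct, dotProduct_mulVec,
      dotProduct_comm (F *ᵥ ω), dotProduct_mulVec]
    constructor <;> intro h <;> linarith
  have hregion : optimalityRegion c G ψ F Ω A x₀ σ₀ = Ω ∩
      ({ω | (G * A - F) *ᵥ ω ≤ ψ - G *ᵥ x₀} ∩
        {ω | (c ᵥ* A + σ₀ ᵥ* F) ⬝ᵥ ω ≤ -(c ⬝ᵥ x₀) - ψ ⬝ᵥ σ₀}) :=
    Set.ext fun ω => and_congr Iff.rfl (and_congr (hprimal ω) (hgap ω))
  rw [hregion]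
  exact hΩ.inter ((isPolyhedron_setOf_mulVec_le _ _).inter (isPolyhedron_setOf_dotProduct_le _ _))

end OptimalityRegion

section Parametric

variable {m n : Type*} [Fintype m] {k : ℕ} {c : n → ℝ} {G : Matrix m n ℝ} {ψ : m → ℝ}
  {F : Matrix m (Fin k) ℝ} {Ω : Set (Fin k → ℝ)} {σstar : (Fin k → ℝ) → m → ℝ}

lemma finite_image_of_isUniqueMinOn
    (hσ : ∀ ω ∈ Ω, IsUniqueMinOn ((ψ + F *ᵥ ω) ⬝ᵥ ·) {σ | 0 ≤ σ ∧ Gᵀ *ᵥ σ = -c} (σstar ω)) :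
    (σstar '' Ω).Finite := by
  refine Set.Finite.of_finite_image (f := fun σ : m → ℝ => {i | σ i = 0}) (Set.toFinite _) ?_
  rintro _ ⟨ω, hω, rfl⟩ _ ⟨ω', hω', rfl⟩ h
  exact (hσ ω' hω').eq_of_forall_eq_zero (hσ ω hω).1 fun i hi => (Set.ext_iff.1 h i).2 hi

variable [Fintype n] {xstar : (Fin k → ℝ) → n → ℝ}

lemma eq_of_mem_optimalityRegion
    (hx : ∀ ω ∈ Ω, IsUniqueMinOn (c ⬝ᵥ ·) {x | G *ᵥ x ≤ ψ + F *ᵥ ω} (xstar ω))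
    (hσ : ∀ ω ∈ Ω, IsUniqueMinOn ((ψ + F *ᵥ ω) ⬝ᵥ ·) {σ | 0 ≤ σ ∧ Gᵀ *ᵥ σ = -c} (σstar ω))
    {A : Matrix n (Fin k) ℝ} {x₀ : n → ℝ} {σ₀ : m → ℝ} (hσ₀ : 0 ≤ σ₀ ∧ Gᵀ *ᵥ σ₀ = -c)
    {ω : Fin k → ℝ} (hω : ω ∈ optimalityRegion c G ψ F Ω A x₀ σ₀) :
    xstar ω = A *ᵥ ω + x₀ ∧ σstar ω = σ₀ :=
  ⟨((hx ω hω.1).eq_of_dotProduct_le hω.2.1 hσ₀ hω.2.2).symm,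
    ((hσ ω hω.1).eq_of_le_neg_dotProduct hω.2.1 hσ₀ hω.2.2).symm⟩

lemma mem_optimalityRegion
    (hx : ∀ ω ∈ Ω, IsUniqueMinOn (c ⬝ᵥ ·) {x | G *ᵥ x ≤ ψ + F *ᵥ ω} (xstar ω))
    (hσ : ∀ ω ∈ Ω, IsUniqueMinOn ((ψ + F *ᵥ ω) ⬝ᵥ ·) {σ | 0 ≤ σ ∧ Gᵀ *ᵥ σ = -c} (σstar ω))
    {A : Matrix n (Fin k) ℝ} {x₀ : n → ℝ} {ω : Fin k → ℝ} (hω : ω ∈ Ω)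
    (hxω : xstar ω = A *ᵥ ω + x₀) : ω ∈ optimalityRegion c G ψ F Ω A x₀ (σstar ω) := by
  rw [optimalityRegion, Set.mem_sep_iff, ← hxω]
  exact ⟨hω, (hx ω hω).1, (dotProduct_eq_neg_of_isMinOn (hx ω hω).1 (hx ω hω).isMinOn
    (hσ ω hω).1 (hσ ω hω).isMinOn).le⟩

end Parametric

/-- multiparametric programming. Consider the parametric LP
`min cᵀx s.t. Gx ≤ ψ + Fω` and its dual
`max −σᵀ(ψ + Fω) s.t. σ ≥ 0, Gᵀσ = −c`. If `Ω` is a polyhedron and for every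
`ω ∈ Ω` the values `x*(ω)` and `σ*(ω)` are the unique primal and dual optimal
solutions, then `Ω` is covered by finitely many polyhedra on each of which `x*`
is affine and `σ*` is constant: the primal decision policy is piecewise affine
and the dual decision policy is stepwise. -/
theorem stmt3_multiparametric_lp_policies
    {n m k : ℕ}
    (c : Fin n → ℝ) (G : Matrix (Fin m) (Fin n) ℝ) (ψ : Fin m → ℝ)
    (F : Matrix (Fin m) (Fin k) ℝ)
    (Ω : Set (Fin k → ℝ)) (hΩ : IsPolyhedron Ω)
    (xstar : (Fin k → ℝ) → (Fin n → ℝ))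
    (σstar : (Fin k → ℝ) → (Fin m → ℝ))
    -- `x*(ω)` is the unique optimal solution of the primal LP(ω)
    (hprimal : ∀ ω ∈ Ω,
      (∀ i, G.mulVec (xstar ω) i ≤ (ψ + F.mulVec ω) i) ∧
      (∀ x : Fin n → ℝ, (∀ i, G.mulVec x i ≤ (ψ + F.mulVec ω) i) →
        x ≠ xstar ω →
          dotProduct c (xstar ω) < dotProduct c x))
    -- `σ*(ω)` is the unique optimal solution of the dual
    (hdual : ∀ ω ∈ Ω,
      ((∀ i, 0 ≤ σstar ω i) ∧ (Matrix.transpose G).mulVec (σstar ω) = -c) ∧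
      (∀ σ : Fin m → ℝ, ((∀ i, 0 ≤ σ i) ∧ (Matrix.transpose G).mulVec σ = -c) →
        σ ≠ σstar ω →
          -dotProduct σ (ψ + F.mulVec ω) < -dotProduct (σstar ω) (ψ + F.mulVec ω))) :
    ∃ (N : ℕ) (R : Fin N → Set (Fin k → ℝ)),
      (∀ i, IsPolyhedron (R i)) ∧
      (⋃ i, R i) = Ω ∧
      (∀ i, ∃ (A : Matrix (Fin n) (Fin k) ℝ) (b : Fin n → ℝ),
        ∀ ω ∈ R i, xstar ω = A.mulVec ω + b) ∧
      (∀ i, ∃ σ₀ : Fin m → ℝ, ∀ ω ∈ R i, σstar ω = σ₀) := by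
  have hx : ∀ ω ∈ Ω, IsUniqueMinOn (c ⬝ᵥ ·) {x | G *ᵥ x ≤ ψ + F *ᵥ ω} (xstar ω) := hprimal
  have hσ : ∀ ω ∈ Ω, IsUniqueMinOn ((ψ + F *ᵥ ω) ⬝ᵥ ·) {σ | 0 ≤ σ ∧ Gᵀ *ᵥ σ = -c} (σstar ω) :=
    fun ω hω => ⟨(hdual ω hω).1, fun σ hfeas hne => by
      show (ψ + F *ᵥ ω) ⬝ᵥ σstar ω < (ψ + F *ᵥ ω) ⬝ᵥ σ
      rw [dotProduct_comm _ σ, dotProduct_comm _ (σstar ω)]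
      exact neg_lt_neg_iff.1 ((hdual ω hω).2 σ hfeas hne)⟩
  have : Finite (σstar '' Ω) := (finite_image_of_isUniqueMinOn hσ).to_subtype
  let InjRows := {J : Set (Fin m) // Injective (G.submatrix ((↑) : J → Fin m) id).mulVec}
  choose A x₀ hA using fun J : InjRows =>
    exists_affine_of_injective J.2 (F.submatrix (↑) id) (ψ ∘ (↑))
  let R : InjRows × (σstar '' Ω) → Set (Fin k → ℝ) := fun p =>
    optimalityRegion c G ψ F Ω (A p.1) (x₀ p.1) p.2
  have hR : ∀ p, ∀ ω ∈ R p, xstar ω = A p.1 *ᵥ ω + x₀ p.1 ∧ σstar ω = p.2 := fun p ω hω => by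
    obtain ⟨_, _, ω', hω', hp⟩ := p
    exact eq_of_mem_optimalityRegion hx hσ (hp ▸ (hσ ω' hω').1) hω
  let e := Finite.equivFin (InjRows × (σstar '' Ω))
  refine ⟨_, fun i => R (e.symm i), fun i => isPolyhedron_optimalityRegion c G ψ F Ω hΩ _ _ _,
    ?_, fun i => ⟨_, _, fun ω hω => (hR _ ω hω).1⟩, fun i => ⟨_, fun ω hω => (hR _ ω hω).2⟩⟩
  rw [e.symm.surjective.iUnion_comp R]
  refine subset_antisymm (Set.iUnion_subset fun p ω hω => hω.1) fun ω hω => ?_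
  have hJ := (hx ω hω).injective_mulVec_active
  exact Set.mem_iUnion.2 ⟨(⟨_, hJ⟩, ⟨σstar ω, ω, hω, rfl⟩),
    mem_optimalityRegion hx hσ hω (hA ⟨_, hJ⟩ _ _ (funext fun i => i.2))⟩
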